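/- arXiv:1909.07715 — 2 statements merged into one kernel-verified Lean document; each statement's English description precedes it below -/
import Mathlib

section
/- Laplacian comparison: fix x ∈ V, and suppose inf_{y≠x}κ(x,y) ≥ K for some K ∈ ℝ and ℋ_x ≥ Λ for some Λ ≤ −1. Then ℒρ_x(y) ≥ K·ρ_x(y) + Λ for all y ∈ V ∖ {x}, where ρ_x(y) = d(x,y). -/
open Finset Filter Topology MeasureTheory
open scoped Classical

noncomputable section

variable {V : Type*}

/-- Vertex weight `μ(x) = Σ_y μ_{xy}`. -/
def vdeg [Fintype V] (μ : V → V → ℝ) (x : V) : ℝ := ∑ y, μ x y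

/-- Transition probability kernel `P(x,y) = μ_{xy}/μ(x)`. -/
def transP [Fintype V] (μ : V → V → ℝ) (x y : V) : ℝ := μ x y / vdeg μ x

/-- `m` is the Perron measure of `(V,μ)`. -/
def IsPerron [Fintype V] (μ : V → V → ℝ) (m : V → ℝ) : Prop :=
  (∀ x, 0 < m x) ∧ (∑ x, m x = 1) ∧ ∀ x, m x = ∑ y, m y * transP μ y x

/-- Mean transition probability kernel `𝒫 = (P + ←P)/2`. -/
def meanK [Fintype V] (μ : V → V → ℝ) (m : V → ℝ) (x y : V) : ℝ :=
  (transP μ x y + m y / m x * transP μ y x) / 2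

/-- There is a directed path of length `n` from `x` to `y`. -/
def HasPathLen (μ : V → V → ℝ) (x y : V) (n : ℕ) : Prop :=
  ∃ c : ℕ → V, c 0 = x ∧ c n = y ∧ ∀ i < n, 0 < μ (c i) (c (i + 1))

/-- The (non-symmetric) graph distance. -/
def gdist (μ : V → V → ℝ) (x y : V) : ℝ :=
  sInf {r : ℝ | ∃ n : ℕ, (r : ℝ) = (n : ℝ) ∧ HasPathLen μ x y n}

/-- The graph is simple: no loops. -/
def IsSimpleW (μ : V → V → ℝ) : Prop := ∀ x, μ x x = 0

/-- The edge weight is nonnegative. -/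
def Nonneg (μ : V → V → ℝ) : Prop := ∀ x y, 0 ≤ μ x y

/-- The graph is strongly connected. -/
def StronglyConnectedW (μ : V → V → ℝ) : Prop := ∀ x y, ∃ n, HasPathLen μ x y n

/-- `π` is a coupling of the probability measures `ν₀, ν₁`. -/
def IsCoupling [Fintype V] (π : V → V → ℝ) (ν₀ ν₁ : V → ℝ) : Prop :=
  (∀ x y, 0 ≤ π x y) ∧ (∀ x, ∑ y, π x y = ν₀ x) ∧ (∀ y, ∑ x, π x y = ν₁ y)

/-- The L¹-Wasserstein distance with cost `d`. -/
def Wass [Fintype V] (d : V → V → ℝ) (ν₀ ν₁ : V → ℝ) : ℝ :=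
  sInf {c : ℝ | ∃ π, IsCoupling π ν₀ ν₁ ∧ c = ∑ x, ∑ y, d x y * π x y}

/-- The probability measure `ν^ε_x`. -/
def nu [Fintype V] (P : V → V → ℝ) (ε : ℝ) (x z : V) : ℝ :=
  if z = x then 1 - ε else ε * P x z

/-- `κ_ε(x,y) = 1 − W(ν^ε_x, ν^ε_y)/d(x,y)`. -/
def kappaEps [Fintype V] (μ : V → V → ℝ) (m : V → ℝ) (ε : ℝ) (x y : V) : ℝ :=
  1 - Wass (gdist μ) (nu (meanK μ m) ε x) (nu (meanK μ m) ε y) / gdist μ x y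

/-- The (positive) Chung Laplacian associated with a kernel `P`. -/
def chungL [Fintype V] (P : V → V → ℝ) (f : V → ℝ) (x : V) : ℝ :=
  f x - ∑ y, P x y * f y

/-- The negative Laplacian `Δ = −ℒ`. -/
def negL [Fintype V] (P : V → V → ℝ) (f : V → ℝ) (x : V) : ℝ :=
  (∑ y, P x y * f y) - f x

/-- `f` is 1-Lipschitz with respect to the non-symmetric distance `d`. -/
def Lip1 (d : V → V → ℝ) (f : V → ℝ) : Prop := ∀ x y, f y - f x ≤ d x y

/-- The asymptotic mean curvature `ℋ_x = ℒρ_x(x)`. -/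
def Hout [Fintype V] (μ : V → V → ℝ) (m : V → ℝ) (x : V) : ℝ :=
  chungL (meanK μ m) (fun y => gdist μ x y) x

/-- The reverse asymptotic mean curvature `←ℋ_x = ℒ←ρ_x(x)`. -/
def Hin [Fintype V] (μ : V → V → ℝ) (m : V → ℝ) (x : V) : ℝ :=
  chungL (meanK μ m) (fun y => gdist μ y x) x

/-- The mixed asymptotic mean curvature `ℋ(x,y) = −(ℋ_x + ←ℋ_y)`. -/
def Hmix [Fintype V] (μ : V → V → ℝ) (m : V → ℝ) (x y : V) : ℝ :=
  -(Hout μ m x + Hin μ m y)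

/-- The neighborhood `𝒩_x = N_x ∪ ←N_x`. -/
def nbr [Fintype V] (μ : V → V → ℝ) (x : V) : Finset V :=
  Finset.univ.filter (fun y => 0 < μ x y ∨ 0 < μ y x)


/-! ### Auxiliary lemmas -/

lemma hasPathLen_trans' {V : Type*} {μ : V → V → ℝ} {x y z : V} {n k : ℕ}
    (h1 : HasPathLen μ x y n) (h2 : HasPathLen μ y z k) :
    HasPathLen μ x z (n + k) := by
  obtain ⟨c, hc0, hcn, hce⟩ := h1
  obtain ⟨c', hc0', hck, hce'⟩ := h2
  refine ⟨fun i => if i ≤ n then c i else c' (i - n), by simp [hc0], ?_, ?_⟩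
  · show (if n + k ≤ n then c (n + k) else c' (n + k - n)) = z
    by_cases h : n + k ≤ n
    · have hk : k = 0 := by omega
      have hnk : n + k = n := by omega
      rw [if_pos h, hnk, hcn, ← hc0']
      rw [hk] at hck; exact hck
    · rw [if_neg h]
      have : n + k - n = k := by omega
      rw [this, hck]
  · intro i hi
    show 0 < μ (if i ≤ n then c i else c' (i - n)) (if i + 1 ≤ n then c (i + 1) else c' (i + 1 - n))
    by_cases h : i + 1 ≤ n
    · have h' : i ≤ n := by omega
      rw [if_pos h, if_pos h']
      exact hce i (by omega)
    · have hin : n ≤ i := by omega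
      have he : (if i ≤ n then c i else c' (i - n)) = c' (i - n) := by
        by_cases h2' : i ≤ n
        · have : i = n := le_antisymm h2' hin
          subst this
          simp [hcn, ← hc0']
        · simp [h2']
      have harith : i + 1 - n = i - n + 1 := by omega
      rw [he, if_neg h, harith]
      exact hce' (i - n) (by omega)

lemma gdist_eq_find' {V : Type*} {μ : V → V → ℝ} {x y : V} (h : ∃ n, HasPathLen μ x y n) :
    gdist μ x y = (Nat.find h : ℝ) := by
  have hmem : (Nat.find h : ℝ) ∈ {r : ℝ | ∃ n : ℕ, (r : ℝ) = (n : ℝ) ∧ HasPathLen μ x y n} := by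
    exact ⟨Nat.find h, rfl, Nat.find_spec h⟩
  apply le_antisymm
  · refine csInf_le ⟨0, ?_⟩ hmem
    rintro r ⟨n, rfl, -⟩; positivity
  · apply le_csInf ⟨_, hmem⟩
    rintro r ⟨n, rfl, hn⟩
    exact_mod_cast Nat.find_min' h hn

lemma gdist_self_eq' {V : Type*} {μ : V → V → ℝ} {x : V} (h : ∃ n, HasPathLen μ x x n) :
    gdist μ x x = 0 := by
  rw [gdist_eq_find' h, Nat.cast_eq_zero, Nat.find_eq_zero]
  exact ⟨fun _ => x, rfl, rfl, fun i hi => absurd hi (Nat.not_lt_zero i)⟩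

lemma gdist_triangle' {V : Type*} {μ : V → V → ℝ}
    (hconn : ∀ a b, ∃ n, HasPathLen μ a b n) (a b c : V) :
    gdist μ a c ≤ gdist μ a b + gdist μ b c := by
  rw [gdist_eq_find' (hconn a c), gdist_eq_find' (hconn a b), gdist_eq_find' (hconn b c)]
  have := Nat.find_min' (hconn a c)
    (hasPathLen_trans' (Nat.find_spec (hconn a b)) (Nat.find_spec (hconn b c)))
  exact_mod_cast this

lemma gdist_one_le' {V : Type*} {μ : V → V → ℝ} {x y : V} (hxy : y ≠ x)
    (h : ∃ n, HasPathLen μ x y n) : (1 : ℝ) ≤ gdist μ x y := by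
  rw [gdist_eq_find' h]
  have : Nat.find h ≠ 0 := by
    intro h0
    obtain ⟨c, hc0, hcn, -⟩ := Nat.find_spec h
    rw [h0] at hcn
    exact hxy (hcn ▸ hc0 ▸ rfl)
  exact_mod_cast Nat.one_le_iff_ne_zero.mpr this

lemma wass_ge' {V : Type*} [Fintype V] {d : V → V → ℝ} {f : V → ℝ} (hf : Lip1 d f)
    {ν₀ ν₁ : V → ℝ} (h0 : ∀ x, 0 ≤ ν₀ x) (h1 : ∀ x, 0 ≤ ν₁ x)
    (hs0 : ∑ x, ν₀ x = 1) (hs1 : ∑ x, ν₁ x = 1) :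
    (∑ z, f z * ν₁ z) - (∑ z, f z * ν₀ z) ≤ Wass d ν₀ ν₁ := by
  have hprod : IsCoupling (fun a b => ν₀ a * ν₁ b) ν₀ ν₁ := by
    refine ⟨fun a b => mul_nonneg (h0 a) (h1 b), fun a => ?_, fun b => ?_⟩
    · rw [← Finset.mul_sum, hs1, mul_one]
    · rw [← Finset.sum_mul, hs0, one_mul]
  apply le_csInf ⟨∑ a, ∑ b, d a b * (ν₀ a * ν₁ b), by exact ⟨_, hprod, rfl⟩⟩
  rintro c ⟨π, ⟨hπ0, hπr, hπc⟩, rfl⟩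
  have key : ∑ a, ∑ b, (f b - f a) * π a b ≤ ∑ a, ∑ b, d a b * π a b := by
    refine Finset.sum_le_sum fun a _ => Finset.sum_le_sum fun b _ => ?_
    exact mul_le_mul_of_nonneg_right (hf a b) (hπ0 a b)
  calc (∑ z, f z * ν₁ z) - (∑ z, f z * ν₀ z)
      = ∑ a, ∑ b, (f b - f a) * π a b := by
        simp_rw [sub_mul, Finset.sum_sub_distrib]
        congr 1
        · rw [Finset.sum_comm]
          refine Finset.sum_congr rfl fun b _ => ?_
          rw [← Finset.mul_sum, hπc b]
        · refine Finset.sum_congr rfl fun a _ => ?_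
          rw [← Finset.mul_sum, hπr a]
    _ ≤ _ := key

lemma nu_expect' {V : Type*} [Fintype V] {P : V → V → ℝ} {v : V} (hPvv : P v v = 0)
    (f : V → ℝ) (ε : ℝ) :
    ∑ z, f z * nu P ε v z = f v - ε * chungL P f v := by
  have hnu : ∀ z, nu P ε v z = (if z = v then 1 - ε else 0) + ε * P v z := by
    intro z
    by_cases h : z = v
    · subst h; simp [nu, hPvv]
    · simp [nu, h]
  have hz : ∀ z, f z * ((if z = v then 1 - ε else 0) + ε * P v z)
      = (if z = v then f z * (1 - ε) else 0) + ε * (P v z * f z) := by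
    intro z; split <;> ring
  rw [Finset.sum_congr rfl (fun z _ => by rw [hnu z, hz z]), Finset.sum_add_distrib,
    Finset.sum_ite_eq' Finset.univ v (fun z => f z * (1 - ε)), if_pos (Finset.mem_univ v),
    ← Finset.mul_sum, chungL]
  ring

lemma nu_sum_one' {V : Type*} [Fintype V] {P : V → V → ℝ} {v : V} (hPvv : P v v = 0)
    (hrow : ∑ z, P v z = 1) (ε : ℝ) : ∑ z, nu P ε v z = 1 := by
  have hnu : ∀ z, nu P ε v z = (if z = v then 1 - ε else 0) + ε * P v z := by
    intro z
    by_cases h : z = v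
    · subst h; simp [nu, hPvv]
    · simp [nu, h]
  simp_rw [hnu, Finset.sum_add_distrib, Finset.sum_ite_eq' Finset.univ v
    (fun _ => (1:ℝ) - ε), Finset.mem_univ, if_pos, ← Finset.mul_sum, hrow]
  ring

lemma nu_nonneg' {V : Type*} [Fintype V] {P : V → V → ℝ} {v : V}
    (hP : ∀ z, 0 ≤ P v z) {ε : ℝ} (hε0 : 0 ≤ ε) (hε1 : ε ≤ 1) (z : V) :
    0 ≤ nu P ε v z := by
  unfold nu
  split
  · linarith
  · exact mul_nonneg hε0 (hP z)

/-- Laplacian comparison for the distance function from a vertex. -/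
theorem laplacian_comparison
    {V : Type*} [Fintype V] (μ : V → V → ℝ) (m : V → ℝ)
    (hnn : Nonneg μ) (hsimple : IsSimpleW μ) (hconn : StronglyConnectedW μ)
    (hm : IsPerron μ m) (x : V) (κ : V → ℝ)
    (hκ : ∀ y : V, y ≠ x →
      Tendsto (fun ε => kappaEps μ m ε x y / ε) (𝓝[>] (0:ℝ)) (𝓝 (κ y)))
    (K Λ : ℝ) (hΛ : Λ ≤ -1)
    (hKb : ∀ y : V, y ≠ x → K ≤ κ y)
    (hHx : Λ ≤ Hout μ m x) :
    ∀ y : V, y ≠ x →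
      K * gdist μ x y + Λ ≤ chungL (meanK μ m) (fun z => gdist μ x z) y := by
  intro y hy
  -- Setup: basic positivity of vertex degrees
  have hvdeg : ∀ v : V, 0 < vdeg μ v := by
    intro v
    have hex : ∃ w : V, w ≠ v := by
      by_cases hvx : v = x
      · exact ⟨y, by rw [hvx]; exact hy⟩
      · exact ⟨x, fun h => hvx h.symm⟩
    obtain ⟨w, hw⟩ := hex
    obtain ⟨n, c, hc0, hcn, hce⟩ := hconn v w
    have hn : n ≠ 0 := by
      intro h0; rw [h0] at hcn; exact hw (hcn ▸ hc0 ▸ rfl)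
    have hedge : 0 < μ v (c 1) := hc0 ▸ hce 0 (Nat.pos_of_ne_zero hn)
    have : μ v (c 1) ≤ vdeg μ v :=
      Finset.single_le_sum (fun z _ => hnn v z) (Finset.mem_univ (c 1))
    linarith
  have hmpos := hm.1
  have htransnn : ∀ v z : V, 0 ≤ transP μ v z :=
    fun v z => div_nonneg (hnn v z) (hvdeg v).le
  have htransrow : ∀ v : V, ∑ z, transP μ v z = 1 := by
    intro v
    unfold transP
    rw [← Finset.sum_div]
    exact div_self (hvdeg v).ne'
  set P := meanK μ m with hP
  have hPnn : ∀ v z : V, 0 ≤ P v z := by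
    intro v z
    unfold P
    unfold meanK
    have h1 := htransnn v z
    have h2 : 0 ≤ m z / m v * transP μ z v :=
      mul_nonneg (div_nonneg (hmpos z).le (hmpos v).le) (htransnn z v)
    linarith
  have hProw : ∀ v : V, ∑ z, P v z = 1 := by
    intro v
    unfold P
    unfold meanK
    rw [← Finset.sum_div]
    rw [Finset.sum_add_distrib, htransrow v]
    have : ∑ z, m z / m v * transP μ z v = (∑ z, m z * transP μ z v) / m v := by
      rw [Finset.sum_div]
      exact Finset.sum_congr rfl fun z _ => by ring
    rw [this, ← hm.2.2 v, div_self (hmpos v).ne']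
    norm_num
  have hPdiag : ∀ v : V, P v v = 0 := by
    intro v
    unfold P
    unfold meanK transP
    rw [hsimple v]
    simp
  -- The distance function ρ = gdist μ x · is 1-Lipschitz
  set ρ : V → ℝ := fun z => gdist μ x z with hρ
  have hLip : Lip1 (gdist μ) ρ := by
    intro a b
    have := gdist_triangle' hconn x a b
    simp only [hρ]
    linarith
  have hρx : ρ x = 0 := gdist_self_eq' (hconn x x)
  set d : ℝ := gdist μ x y with hd
  have hd1 : (1 : ℝ) ≤ d := gdist_one_le' hy (hconn x y)
  have hdpos : 0 < d := lt_of_lt_of_le one_pos hd1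
  set L : ℝ := chungL P ρ y with hL
  set Hx : ℝ := Hout μ m x with hHdef
  have hHx' : Hx = chungL P ρ x := rfl
  -- Key estimate for small ε
  have key : ∀ ε : ℝ, 0 < ε → ε ≤ 1 → kappaEps μ m ε x y / ε ≤ (L - Hx) / d := by
    intro ε hε0 hε1
    have hWge : d - ε * (L - Hx) ≤ Wass (gdist μ) (nu P ε x) (nu P ε y) := by
      have h1 := wass_ge' hLip (nu_nonneg' (hPnn x) hε0.le hε1)
        (nu_nonneg' (hPnn y) hε0.le hε1)
        (nu_sum_one' (hPdiag x) (hProw x) ε) (nu_sum_one' (hPdiag y) (hProw y) ε)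
      rw [nu_expect' (hPdiag y) ρ ε, nu_expect' (hPdiag x) ρ ε] at h1
      rw [hρx] at h1
      have h2 : ρ y = d := rfl
      rw [h2, ← hL, ← hHx'] at h1
      linarith
    have hkan : kappaEps μ m ε x y ≤ ε * (L - Hx) / d := by
      unfold kappaEps
      rw [← hd, ← hP]
      set W := Wass (gdist μ) (nu P ε x) (nu P ε y) with hW
      have h2 : (d - ε * (L - Hx)) / d ≤ W / d := by
        apply div_le_div_of_nonneg_right hWge hdpos.le
      have h3 : (d - ε * (L - Hx)) / d = 1 - ε * (L - Hx) / d := by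
        field_simp
      linarith
    rw [div_le_iff₀ hε0]
    calc kappaEps μ m ε x y ≤ ε * (L - Hx) / d := hkan
      _ = (L - Hx) / d * ε := by ring
  -- Pass to the limit ε → 0⁺
  have hev : ∀ᶠ ε in 𝓝[>] (0:ℝ), kappaEps μ m ε x y / ε ≤ (L - Hx) / d := by
    filter_upwards [Ioc_mem_nhdsGT_of_mem (Set.left_mem_Ico.mpr one_pos)] with ε hε
    exact key ε hε.1 hε.2
  have hκle : κ y ≤ (L - Hx) / d := le_of_tendsto (hκ y hy) hev
  have h3 : κ y * d ≤ L - Hx := (le_div_iff₀ hdpos).mp hκle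
  have h4 : K * d ≤ κ y * d := mul_le_mul_of_nonneg_right (hKb y hy) hdpos.le
  show K * d + Λ ≤ L
  have hHxb : Λ ≤ Hx := hHx
  linarith
end
end

section
/- Dirichlet Cheeger inequality for the p-Laplacian: for every p ∈ (1,∞) and every nonempty proper subset 𝒱 ⊂ V, λ^D_p(𝒱) ≥ (2^{p−1}/p^p)·(ℐ^D_𝒱)^p, where λ^D_p(𝒱) = inf over nonzero f vanishing on V∖𝒱 of [(1/2)Σ_{x,y}|f(y)−f(x)|^p 𝔪_{xy} / Σ_x|f(x)|^p 𝔪(x)], and ℐ^D_𝒱 = inf over nonempty Ω ⊂ 𝒱 of 𝔪(∂Ω)/𝔪(Ω). -/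
/-!
Co-area: splitting a nonnegative `h` supported in `𝒱` into its level sets shows
`ℐ · Σ h 𝔪 ≤ ½ Σ |h(y) − h(x)| 𝔪_{xy}`. Apply this to `h = |f|^p`. Amghibech's inequality
bounds `| |f(y)|^p − |f(x)|^p |` by `p | |f(y)| − |f(x)| |` times the `1/q`-th power of the mean of
`|f(x)|^p` and `|f(y)|^p`, and Hölder's inequality with weights `𝔪_{xy}` bounds the resulting
sum by `E(|f|)^{1/p} (Σ |f|^p 𝔪)^{1/q}`, where `E` is the `p`-energy; the mean term is
controlled because `𝔪` is stationary, so the rows of `𝔪_{xy}` sum to at most `𝔪(x)`. Dividing by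
`(Σ |f|^p 𝔪)^{1/q}` and raising to the power `p` gives
`ℐ^p Σ |f|^p 𝔪 ≤ (p/2)^p E(|f|) ≤ (p/2)^p E(f)`.
-/

open Finset Filter Topology MeasureTheory
open scoped Classical

noncomputable section

variable {V : Type*}

/-- The boundary measure `𝔪(∂Ω)`. -/
def bdryM {V : Type*} [Fintype V] (w : V → V → ℝ) (Ω : Finset V) : ℝ :=
  ∑ y ∈ Ω, ∑ z ∈ Ωᶜ, w y z

/-- The Dirichlet isoperimetric constant on `𝒱`. -/
def isoD {V : Type*} [Fintype V] (w : V → V → ℝ) (m : V → ℝ) (𝒱 : Finset V) : ℝ :=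
  sInf {r : ℝ | ∃ Ω : Finset V, Ω.Nonempty ∧ Ω ⊆ 𝒱 ∧
    r = bdryM w Ω / ∑ x ∈ Ω, m x}

/-- The Dirichlet `p`-Poincaré constant over `𝒱`. -/
def lamD {V : Type*} [Fintype V] (w : V → V → ℝ) (m : V → ℝ) (p : ℝ) (𝒱 : Finset V) : ℝ :=
  sInf {r : ℝ | ∃ f : V → ℝ, f ≠ 0 ∧ (∀ x ∉ 𝒱, f x = 0) ∧
    r = ((1/2) * ∑ x, ∑ y, |f y - f x| ^ p * w x y) / ∑ x, |f x| ^ p * m x}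


open Finset

lemma mul_mul_rpow_sub_one_le {p : ℝ} (hp : 1 < p) {u t : ℝ} (hu : 0 ≤ u) (ht : 0 ≤ t) :
    p * u * t ^ (p - 1) ≤ u ^ p + (p - 1) * t ^ p := by
  have hpq := Real.HolderConjugate.conjExponent hp
  have hyoung := Real.young_inequality_of_nonneg hu (Real.rpow_nonneg ht (p - 1)) hpq
  rw [← Real.rpow_mul ht, hpq.sub_one_mul_conj] at hyoung
  calc p * u * t ^ (p - 1) = p * (u * t ^ (p - 1)) := mul_assoc _ _ _
    _ ≤ p * (u ^ p / p + t ^ p / p.conjExponent) := by gcongr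
    _ = u ^ p + (p - 1) * t ^ p := by
      rw [mul_add, mul_div_cancel₀ _ hpq.ne_zero, ← mul_div_assoc, mul_div_right_comm,
        hpq.div_conj_eq_sub_one]

/-- With `M = (a^p + t^p)/2`, multiplying by `M ^ p⁻¹` turns the derivative into
`p M + (p - 1)/2 · p (t - a) t^(p-1) - p M^(1/p) t^(p-1)`, and Young's inequality, applied to
`(M^(1/p), t)` and to `(a, t)`, bounds this below by `0`. -/
lemma amghibech_deriv_nonneg {p q : ℝ} (hpq : p.HolderConjugate q) {a t : ℝ} (ha : 0 ≤ a)
    (ht : 0 < t) :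
    0 ≤ p * ((a ^ p + t ^ p) / 2) ^ q⁻¹
      + p * (t - a) * (q⁻¹ * ((a ^ p + t ^ p) / 2) ^ (q⁻¹ - 1) * (p * t ^ (p - 1) / 2))
      - p * t ^ (p - 1) := by
  set M := (a ^ p + t ^ p) / 2 with hM
  have hM0 : 0 < M := by positivity
  have hN : M ^ q⁻¹ * M ^ p⁻¹ = M := by
    rw [← Real.rpow_add hM0, add_comm, hpq.inv_add_inv_eq_one, Real.rpow_one]
  have hN' : M ^ (q⁻¹ - 1) * M ^ p⁻¹ = 1 := by
    rw [← Real.rpow_add hM0, ← hpq.one_sub_inv]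
    ring_nf
    exact Real.rpow_zero M
  have hpq' : p * q⁻¹ = p - 1 := by rw [← div_eq_mul_inv, hpq.div_conj_eq_sub_one]
  have htt : t * t ^ (p - 1) = t ^ p := by
    rw [Real.rpow_sub_one ht.ne', mul_div_cancel₀ _ ht.ne']
  have hyoungM := mul_mul_rpow_sub_one_le hpq.lt (Real.rpow_nonneg hM0.le p⁻¹) ht.le
  rw [Real.rpow_inv_rpow hM0.le hpq.ne_zero] at hyoungM
  have hyounga := mul_mul_rpow_sub_one_le hpq.lt ha ht.le
  refine nonneg_of_mul_nonneg_left ?_ (Real.rpow_pos_of_pos hM0 p⁻¹)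
  have key : (p * M ^ q⁻¹ + p * (t - a) * (q⁻¹ * M ^ (q⁻¹ - 1) * (p * t ^ (p - 1) / 2))
      - p * t ^ (p - 1)) * M ^ p⁻¹
      = p * M + (p - 1) / 2 * (p * t * t ^ (p - 1) - p * a * t ^ (p - 1))
        - p * M ^ p⁻¹ * t ^ (p - 1) := by
    linear_combination (p * (t - a) * q⁻¹ * (p * t ^ (p - 1) / 2)) * hN' + p * hN
      + (p * (t - a) * t ^ (p - 1) / 2) * hpq'
  rw [key, mul_assoc p t, htt]
  nlinarith [hpq.sub_one_pos]

lemma rpow_sub_rpow_le_of_le {p q : ℝ} (hpq : p.HolderConjugate q) {a b : ℝ} (ha : 0 ≤ a)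
    (hab : a ≤ b) :
    b ^ p - a ^ p ≤ p * (b - a) * ((a ^ p + b ^ p) / 2) ^ q⁻¹ := by
  set H : ℝ → ℝ := fun t => p * (t - a) * ((a ^ p + t ^ p) / 2) ^ q⁻¹ - (t ^ p - a ^ p)
  have hderiv : ∀ t, 0 < t → HasDerivAt H (p * ((a ^ p + t ^ p) / 2) ^ q⁻¹
      + p * (t - a) * (q⁻¹ * ((a ^ p + t ^ p) / 2) ^ (q⁻¹ - 1) * (p * t ^ (p - 1) / 2))
      - p * t ^ (p - 1)) t := by
    intro t ht
    have hpow : HasDerivAt (fun s : ℝ => s ^ p) (p * t ^ (p - 1)) t :=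
      Real.hasDerivAt_rpow_const (Or.inl ht.ne')
    have hmean := (hpow.const_add (a ^ p)).div_const 2
    have hM : (a ^ p + t ^ p) / 2 ≠ 0 := by positivity
    have hroot := (Real.hasDerivAt_rpow_const (p := q⁻¹) (Or.inl hM)).comp t hmean
    have hlin : HasDerivAt (fun s : ℝ => p * (s - a)) p t := by
      simpa using ((hasDerivAt_id t).sub_const a).const_mul p
    exact ((hlin.mul hroot).sub (hpow.sub_const (a ^ p))).congr_deriv rfl
  have hcont : Continuous H := by
    have := hpq.inv_nonneg
    have := hpq.symm.inv_nonneg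
    fun_prop (disch := first | positivity | linarith [hpq.pos])
  have hmono : MonotoneOn H (Set.Icc a b) := by
    refine monotoneOn_of_deriv_nonneg (convex_Icc a b) hcont.continuousOn
      (fun t ht => ?_) (fun t ht => ?_)
    all_goals
      rw [interior_Icc] at ht
      have ht0 : 0 < t := ha.trans_lt ht.1
    · exact (hderiv t ht0).differentiableAt.differentiableWithinAt
    · rw [(hderiv t ht0).deriv]
      exact amghibech_deriv_nonneg hpq ha ht0
  have := hmono ⟨le_rfl, hab⟩ ⟨hab, le_rfl⟩ hab
  simp only [H, sub_self, mul_zero, zero_mul] at this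
  linarith

lemma abs_rpow_sub_rpow_le {p q : ℝ} (hpq : p.HolderConjugate q) {a b : ℝ} (ha : 0 ≤ a)
    (hb : 0 ≤ b) :
    |b ^ p - a ^ p| ≤ p * |b - a| * ((a ^ p + b ^ p) / 2) ^ q⁻¹ := by
  rcases le_total a b with hab | hba
  · rw [abs_of_nonneg (sub_nonneg.2 (Real.rpow_le_rpow ha hab hpq.nonneg)),
      abs_of_nonneg (sub_nonneg.2 hab)]
    exact rpow_sub_rpow_le_of_le hpq ha hab
  · rw [abs_sub_comm, abs_sub_comm b,
      abs_of_nonneg (sub_nonneg.2 (Real.rpow_le_rpow hb hba hpq.nonneg)),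
      abs_of_nonneg (sub_nonneg.2 hba), add_comm]
    exact rpow_sub_rpow_le_of_le hpq hb hba

lemma inner_le_weight_mul_Lp_mul_Lq_of_nonneg {ι : Type*} (s : Finset ι) {p q : ℝ}
    (hpq : p.HolderConjugate q) {w f g : ι → ℝ} (hw : ∀ i ∈ s, 0 ≤ w i)
    (hf : ∀ i ∈ s, 0 ≤ f i) (hg : ∀ i ∈ s, 0 ≤ g i) :
    ∑ i ∈ s, w i * f i * g i
      ≤ (∑ i ∈ s, w i * f i ^ p) ^ p⁻¹ * (∑ i ∈ s, w i * g i ^ q) ^ q⁻¹ := by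
  have hHolder := Real.inner_le_Lp_mul_Lq_of_nonneg s hpq (f := fun i => w i ^ p⁻¹ * f i)
    (g := fun i => w i ^ q⁻¹ * g i)
    (fun i hi => mul_nonneg (Real.rpow_nonneg (hw i hi) _) (hf i hi))
    (fun i hi => mul_nonneg (Real.rpow_nonneg (hw i hi) _) (hg i hi))
  have hfg : ∑ i ∈ s, w i * f i * g i = ∑ i ∈ s, w i ^ p⁻¹ * f i * (w i ^ q⁻¹ * g i) :=
    sum_congr rfl fun i hi => by
      rw [mul_mul_mul_comm, ← Real.rpow_add' (hw i hi) (by simp [hpq.inv_add_inv_eq_one]),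
        hpq.inv_add_inv_eq_one, Real.rpow_one, mul_assoc]
  have hf' : ∑ i ∈ s, w i * f i ^ p = ∑ i ∈ s, (w i ^ p⁻¹ * f i) ^ p :=
    sum_congr rfl fun i hi => by
      rw [Real.mul_rpow (Real.rpow_nonneg (hw i hi) _) (hf i hi),
        Real.rpow_inv_rpow (hw i hi) hpq.ne_zero]
  have hg' : ∑ i ∈ s, w i * g i ^ q = ∑ i ∈ s, (w i ^ q⁻¹ * g i) ^ q :=
    sum_congr rfl fun i hi => by
      rw [Real.mul_rpow (Real.rpow_nonneg (hw i hi) _) (hg i hi),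
        Real.rpow_inv_rpow (hw i hi) hpq.symm.ne_zero]
  rw [hfg, hf', hg']
  simpa only [one_div] using hHolder

section Coarea

variable {V : Type*} [Fintype V] {w : V → V → ℝ} {m : V → ℝ} {𝒱 : Finset V}

lemma abs_sub_eq_abs_min_sub_min_add (a b t : ℝ) :
    |b - a| = |min b t - min a t| + |(b - min b t) - (a - min a t)| := by
  grind

lemma bdryM_nonneg (hw : ∀ x y, 0 ≤ w x y) (Ω : Finset V) : 0 ≤ bdryM w Ω :=
  sum_nonneg fun x _ => sum_nonneg fun y _ => hw x y

lemma sum_sum_abs_indicator_sub_mul (hsymm : ∀ x y, w x y = w y x) (Ω : Finset V) {t : ℝ}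
    (ht : 0 ≤ t) :
    ∑ x, ∑ y, |(if y ∈ Ω then t else 0) - (if x ∈ Ω then t else 0)| * w x y
      = 2 * t * bdryM w Ω := by
  have hpt : ∀ x y, |(if y ∈ Ω then t else 0) - (if x ∈ Ω then t else 0)| * w x y
      = t * ((if x ∈ Ω ∧ y ∈ Ωᶜ then w x y else 0) + (if y ∈ Ω ∧ x ∈ Ωᶜ then w y x else 0)) := by
    intro x y
    by_cases hx : x ∈ Ω <;> by_cases hy : y ∈ Ω <;> simp [hx, hy, abs_of_nonneg ht, hsymm x y]
  have hbdry : ∑ x, ∑ y, (if x ∈ Ω ∧ y ∈ Ωᶜ then w x y else 0) = bdryM w Ω := by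
    simp only [ite_and, sum_ite_irrel, sum_const_zero, sum_ite_mem, univ_inter, bdryM]
  simp only [hpt, ← mul_sum, sum_add_distrib]
  rw [sum_comm (f := fun x y => if y ∈ Ω ∧ x ∈ Ωᶜ then w y x else 0), hbdry]
  ring

lemma sum_mul_eq_of_min_eq_indicator {h : V → ℝ} {t : ℝ} {Ω : Finset V}
    (hlevel : ∀ x, min (h x) t = if x ∈ Ω then t else 0) :
    ∑ x, h x * m x = t * ∑ x ∈ Ω, m x + ∑ x, (h x - min (h x) t) * m x := by
  rw [mul_sum, ← univ_inter Ω, ← sum_ite_mem, ← sum_add_distrib]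
  refine sum_congr rfl fun x _ => ?_
  rw [hlevel]
  split_ifs <;> ring

lemma sum_sum_abs_sub_mul_eq_of_min_eq_indicator (hsymm : ∀ x y, w x y = w y x) {h : V → ℝ}
    {t : ℝ} (ht : 0 ≤ t) {Ω : Finset V} (hlevel : ∀ x, min (h x) t = if x ∈ Ω then t else 0) :
    ∑ x, ∑ y, |h y - h x| * w x y = 2 * t * bdryM w Ω
      + ∑ x, ∑ y, |(h y - min (h y) t) - (h x - min (h x) t)| * w x y := by
  rw [← sum_sum_abs_indicator_sub_mul hsymm Ω ht]
  simp only [← hlevel, ← sum_add_distrib, ← add_mul, ← abs_sub_eq_abs_min_sub_min_add]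

lemma bdryM_div_sum_nonneg (hw : ∀ x y, 0 ≤ w x y) (hm : ∀ x, 0 ≤ m x) (Ω : Finset V) :
    0 ≤ bdryM w Ω / ∑ x ∈ Ω, m x :=
  div_nonneg (bdryM_nonneg hw Ω) (sum_nonneg fun x _ => hm x)

lemma isoD_nonneg (hw : ∀ x y, 0 ≤ w x y) (hm : ∀ x, 0 ≤ m x) : 0 ≤ isoD w m 𝒱 :=
  Real.sInf_nonneg <| by
    rintro _ ⟨Ω, -, -, rfl⟩
    exact bdryM_div_sum_nonneg hw hm Ω

lemma isoD_mul_sum_le_bdryM (hw : ∀ x y, 0 ≤ w x y) (hm : ∀ x, 0 ≤ m x) {Ω : Finset V}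
    (hΩ : Ω.Nonempty) (hΩ𝒱 : Ω ⊆ 𝒱) : isoD w m 𝒱 * ∑ x ∈ Ω, m x ≤ bdryM w Ω := by
  have hle : isoD w m 𝒱 ≤ bdryM w Ω / ∑ x ∈ Ω, m x := by
    refine csInf_le ⟨0, ?_⟩ ⟨Ω, hΩ, hΩ𝒱, rfl⟩
    rintro _ ⟨Ω', -, -, rfl⟩
    exact bdryM_div_sum_nonneg hw hm Ω'
  rcases (sum_nonneg fun x _ => hm x : 0 ≤ ∑ x ∈ Ω, m x).eq_or_lt with hzero | hpos
  · rw [← hzero, mul_zero]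
    exact bdryM_nonneg hw Ω
  · exact (le_div_iff₀ hpos).1 hle

/-- Peeling off the lowest positive level `t` of `h` writes `h` as `t • 𝟙_Ω` plus a function with
smaller support, and both the mass and the variation split additively along this decomposition. -/
theorem isoD_mul_sum_le (hw : ∀ x y, 0 ≤ w x y) (hsymm : ∀ x y, w x y = w y x)
    (hm : ∀ x, 0 ≤ m x) {h : V → ℝ} (h0 : ∀ x, 0 ≤ h x) (hsupp : ∀ x ∉ 𝒱, h x = 0) :
    isoD w m 𝒱 * ∑ x, h x * m x ≤ (1 / 2) * ∑ x, ∑ y, |h y - h x| * w x y := by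
  suffices key : ∀ S ⊆ 𝒱, ∀ h : V → ℝ, (∀ x, 0 ≤ h x) → (∀ x ∉ S, h x = 0) →
      isoD w m 𝒱 * ∑ x, h x * m x ≤ (1 / 2) * ∑ x, ∑ y, |h y - h x| * w x y from
    key 𝒱 subset_rfl h h0 hsupp
  intro S
  induction S using Finset.strongInduction with | H S ih => ?_
  intro hS h h0 hsupp
  set Ω := S.filter fun x => 0 < h x
  have hΩc : ∀ x ∉ Ω, h x = 0 := fun x hx => by
    by_cases hxS : x ∈ S
    · exact le_antisymm (not_lt.1 fun hpos => hx (mem_filter.2 ⟨hxS, hpos⟩)) (h0 x)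
    · exact hsupp x hxS
  rcases Ω.eq_empty_or_nonempty with hΩ | hΩ
  · simp [hΩc, hΩ]
  obtain ⟨x₀, hx₀, hmin⟩ := Ω.exists_min_image h hΩ
  set t := h x₀
  have ht : 0 < t := (mem_filter.1 hx₀).2
  have hlevel : ∀ x, min (h x) t = if x ∈ Ω then t else 0 := fun x => by
    by_cases hx : x ∈ Ω
    · simp [hx, hmin x hx]
    · simp [hx, hΩc x hx, ht.le]
  have hrest := ih (Ω.erase x₀) ((erase_ssubset hx₀).trans_le (filter_subset _ S))
    ((erase_subset _ _).trans ((filter_subset _ S).trans hS)) (fun x => h x - min (h x) t)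
    (fun x => sub_nonneg.2 (min_le_left _ _)) (fun x hx => by
      show h x - min (h x) t = 0
      rw [hlevel]
      rcases eq_or_ne x x₀ with rfl | hne
      · simp [hx₀, t]
      · have hxΩ : x ∉ Ω := fun hxΩ => hx (mem_erase.2 ⟨hne, hxΩ⟩)
        simp [hxΩ, hΩc x hxΩ])
  have hlvl := mul_le_mul_of_nonneg_left (isoD_mul_sum_le_bdryM hw hm hΩ
    ((filter_subset _ S).trans hS)) ht.le
  rw [sum_mul_eq_of_min_eq_indicator hlevel,
    sum_sum_abs_sub_mul_eq_of_min_eq_indicator hsymm ht.le hlevel, mul_add]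
  linarith

end Coarea

section Cheeger

variable {V : Type*} [Fintype V] {w : V → V → ℝ} {m : V → ℝ} {𝒱 : Finset V}

lemma sum_sum_mean_mul_le (hsymm : ∀ x y, w x y = w y x) (hrow : ∀ x, ∑ y, w x y ≤ m x)
    {g : V → ℝ} (hg : ∀ x, 0 ≤ g x) :
    ∑ x, ∑ y, (g x + g y) / 2 * w x y ≤ ∑ x, g x * m x := by
  have hswap : ∑ x, ∑ y, g y * w x y = ∑ x, ∑ y, g x * w x y := by
    rw [sum_comm]
    simp only [hsymm]
  calc ∑ x, ∑ y, (g x + g y) / 2 * w x y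
      = (∑ x, ∑ y, g x * w x y + ∑ x, ∑ y, g y * w x y) / 2 := by
        simp only [← sum_add_distrib, sum_div]
        exact sum_congr rfl fun x _ => sum_congr rfl fun y _ => by ring
    _ = ∑ x, g x * ∑ y, w x y := by
        rw [hswap, add_self_div_two]
        simp only [mul_sum]
    _ ≤ ∑ x, g x * m x := sum_le_sum fun x _ => mul_le_mul_of_nonneg_left (hrow x) (hg x)

variable {p q : ℝ}

lemma isoD_mul_sum_rpow_le (hw : ∀ x y, 0 ≤ w x y) (hsymm : ∀ x y, w x y = w y x)
    (hrow : ∀ x, ∑ y, w x y ≤ m x) (hm : ∀ x, 0 ≤ m x) (hpq : p.HolderConjugate q)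
    {g : V → ℝ} (hg : ∀ x, 0 ≤ g x) (hsupp : ∀ x ∉ 𝒱, g x = 0) :
    isoD w m 𝒱 * ∑ x, g x ^ p * m x
      ≤ p / 2 * (∑ x, ∑ y, |g y - g x| ^ p * w x y) ^ p⁻¹
        * (∑ x, g x ^ p * m x) ^ q⁻¹ := by
  set M : V → V → ℝ := fun x y => (g x ^ p + g y ^ p) / 2
  have hM : ∀ x y, 0 ≤ M x y := fun x y =>
    div_nonneg (add_nonneg (Real.rpow_nonneg (hg x) p) (Real.rpow_nonneg (hg y) p)) zero_le_two
  have hp2 : 0 ≤ p / 2 := div_nonneg hpq.nonneg zero_le_two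
  have hholder := inner_le_weight_mul_Lp_mul_Lq_of_nonneg (univ : Finset (V × V)) hpq
    (w := fun z => w z.1 z.2) (f := fun z => |g z.2 - g z.1|) (g := fun z => M z.1 z.2 ^ q⁻¹)
    (fun z _ => hw _ _) (fun z _ => abs_nonneg _) (fun z _ => Real.rpow_nonneg (hM _ _) _)
  simp only [Fintype.sum_prod_type, Real.rpow_inv_rpow (hM _ _) hpq.symm.ne_zero] at hholder
  calc isoD w m 𝒱 * ∑ x, g x ^ p * m x
      ≤ 1 / 2 * ∑ x, ∑ y, |g y ^ p - g x ^ p| * w x y :=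
        isoD_mul_sum_le hw hsymm hm (fun x => Real.rpow_nonneg (hg x) p)
          (fun x hx => by rw [hsupp x hx, Real.zero_rpow hpq.ne_zero])
    _ ≤ 1 / 2 * ∑ x, ∑ y, p * |g y - g x| * M x y ^ q⁻¹ * w x y := by
        refine mul_le_mul_of_nonneg_left (sum_le_sum fun x _ => sum_le_sum fun y _ => ?_)
          one_half_pos.le
        exact mul_le_mul_of_nonneg_right (abs_rpow_sub_rpow_le hpq (hg x) (hg y)) (hw x y)
    _ = p / 2 * ∑ x, ∑ y, w x y * |g y - g x| * M x y ^ q⁻¹ := by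
        simp only [mul_sum]
        exact sum_congr rfl fun x _ => sum_congr rfl fun y _ => by ring
    _ ≤ p / 2 * ((∑ x, ∑ y, w x y * |g y - g x| ^ p) ^ p⁻¹
          * (∑ x, ∑ y, w x y * M x y) ^ q⁻¹) := mul_le_mul_of_nonneg_left hholder hp2
    _ ≤ p / 2 * (∑ x, ∑ y, |g y - g x| ^ p * w x y) ^ p⁻¹
          * (∑ x, g x ^ p * m x) ^ q⁻¹ := by
        simp only [mul_comm (w _ _), ← mul_assoc]
        refine mul_le_mul_of_nonneg_left (Real.rpow_le_rpow ?_
          (sum_sum_mean_mul_le hsymm hrow fun x => Real.rpow_nonneg (hg x) p)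
          hpq.symm.inv_nonneg) (mul_nonneg hp2 (Real.rpow_nonneg ?_ _))
        · exact sum_nonneg fun x _ => sum_nonneg fun y _ => mul_nonneg (hM x y) (hw x y)
        · exact sum_nonneg fun x _ => sum_nonneg fun y _ =>
            mul_nonneg (Real.rpow_nonneg (abs_nonneg _) p) (hw x y)

lemma isoD_rpow_mul_sum_le (hw : ∀ x y, 0 ≤ w x y) (hsymm : ∀ x y, w x y = w y x)
    (hrow : ∀ x, ∑ y, w x y ≤ m x) (hm : ∀ x, 0 ≤ m x) (hpq : p.HolderConjugate q)
    {g : V → ℝ} (hg : ∀ x, 0 ≤ g x) (hsupp : ∀ x ∉ 𝒱, g x = 0) :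
    isoD w m 𝒱 ^ p * ∑ x, g x ^ p * m x
      ≤ (p / 2) ^ p * ∑ x, ∑ y, |g y - g x| ^ p * w x y := by
  set I := isoD w m 𝒱
  set A := ∑ x, ∑ y, |g y - g x| ^ p * w x y
  set B := ∑ x, g x ^ p * m x
  have hI : 0 ≤ I := isoD_nonneg hw hm
  have hA : 0 ≤ A := sum_nonneg fun x _ => sum_nonneg fun y _ =>
    mul_nonneg (Real.rpow_nonneg (abs_nonneg _) p) (hw x y)
  have hp2 : 0 ≤ p / 2 := div_nonneg hpq.nonneg zero_le_two
  rcases (show 0 ≤ B from sum_nonneg fun x _ => mul_nonneg (Real.rpow_nonneg (hg x) p) (hm x)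
    ).eq_or_lt with hB | hB
  · rw [← hB, mul_zero]
    exact mul_nonneg (Real.rpow_nonneg hp2 p) hA
  have hsplit : I * B = I * B ^ p⁻¹ * B ^ q⁻¹ := by
    rw [mul_assoc, ← Real.rpow_add hB, hpq.inv_add_inv_eq_one, Real.rpow_one]
  have hroot : I * B ^ p⁻¹ ≤ p / 2 * A ^ p⁻¹ := by
    refine le_of_mul_le_mul_right ?_ (Real.rpow_pos_of_pos hB q⁻¹)
    rw [← hsplit]
    exact isoD_mul_sum_rpow_le hw hsymm hrow hm hpq hg hsupp
  have hpow := Real.rpow_le_rpow (mul_nonneg hI (Real.rpow_nonneg hB.le _)) hroot hpq.nonneg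
  rwa [Real.mul_rpow hI (Real.rpow_nonneg hB.le _), Real.mul_rpow hp2 (Real.rpow_nonneg hA _),
    Real.rpow_inv_rpow hB.le hpq.ne_zero, Real.rpow_inv_rpow hA hpq.ne_zero] at hpow

lemma isoD_empty : isoD w m ∅ = 0 := by
  simp [isoD]

lemma lamD_empty : lamD w m p ∅ = 0 := by
  rw [lamD]
  convert Real.sInf_empty
  refine Set.eq_empty_of_forall_notMem ?_
  rintro _ ⟨f, hf, hzero, -⟩
  exact hf (funext fun x => hzero x (notMem_empty x))

theorem isoD_rpow_le_lamD (hw : ∀ x y, 0 ≤ w x y) (hsymm : ∀ x y, w x y = w y x)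
    (hrow : ∀ x, ∑ y, w x y ≤ m x) (hm : ∀ x, 0 < m x) (hp : 1 < p) :
    2 ^ (p - 1) / p ^ p * isoD w m 𝒱 ^ p ≤ lamD w m p 𝒱 := by
  have hpq := Real.HolderConjugate.conjExponent hp
  rcases 𝒱.eq_empty_or_nonempty with rfl | ⟨x₀, hx₀⟩
  · rw [isoD_empty, lamD_empty, Real.zero_rpow hpq.ne_zero, mul_zero]
  refine le_csInf ⟨_, Pi.single x₀ 1, by simp, fun x hx => ?_, rfl⟩ ?_
  · exact Pi.single_eq_of_ne (by rintro rfl; exact hx hx₀) _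
  rintro _ ⟨f, hf, hsupp, rfl⟩
  obtain ⟨x₁, hx₁⟩ := Function.ne_iff.1 hf
  have hB : 0 < ∑ x, |f x| ^ p * m x :=
    sum_pos' (fun x _ => mul_nonneg (Real.rpow_nonneg (abs_nonneg _) p) (hm x).le)
      ⟨x₁, mem_univ x₁, mul_pos (Real.rpow_pos_of_pos (abs_pos.2 hx₁) p) (hm x₁)⟩
  have hvar : ∑ x, ∑ y, |(|f y| - |f x|)| ^ p * w x y ≤ ∑ x, ∑ y, |f y - f x| ^ p * w x y :=
    sum_le_sum fun x _ => sum_le_sum fun y _ => mul_le_mul_of_nonneg_right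
      (Real.rpow_le_rpow (abs_nonneg _) (abs_abs_sub_abs_le_abs_sub _ _) hpq.nonneg) (hw x y)
  have hcheeger := isoD_rpow_mul_sum_le hw hsymm hrow (fun x => (hm x).le) hpq
    (𝒱 := 𝒱) (g := fun x => |f x|) (fun x => abs_nonneg _) (fun x hx => by simp [hsupp x hx])
  have hconst : 2 ^ (p - 1) / p ^ p * (p / 2) ^ p = 1 / 2 := by
    rw [Real.div_rpow hpq.nonneg zero_le_two, Real.rpow_sub_one two_ne_zero]
    field_simp
  rw [le_div_iff₀ hB, mul_assoc]
  calc 2 ^ (p - 1) / p ^ p * (isoD w m 𝒱 ^ p * ∑ x, |f x| ^ p * m x)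
      ≤ 2 ^ (p - 1) / p ^ p * ((p / 2) ^ p * ∑ x, ∑ y, |f y - f x| ^ p * w x y) := by
        refine mul_le_mul_of_nonneg_left (hcheeger.trans ?_) ?_
        · exact mul_le_mul_of_nonneg_left hvar (Real.rpow_nonneg (by linarith) p)
        · exact div_nonneg (Real.rpow_nonneg zero_le_two _) (Real.rpow_nonneg hpq.nonneg p)
    _ = 1 / 2 * ∑ x, ∑ y, |f y - f x| ^ p * w x y := by rw [← mul_assoc, hconst]

end Cheeger

section MeanKernel

variable {V : Type*} [Fintype V] {μ : V → V → ℝ} {m : V → ℝ}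

lemma transP_nonneg (hμ : Nonneg μ) (x y : V) : 0 ≤ transP μ x y :=
  div_nonneg (hμ x y) (sum_nonneg fun z _ => hμ x z)

/-- The row sum is `1`, or `0` at a vertex without out-edges (where `μ x y / 0 = 0`). -/
lemma sum_transP_le_one (x : V) : ∑ y, transP μ x y ≤ 1 := by
  simp only [transP, ← sum_div]
  exact div_self_le_one _

lemma mul_meanK (hm : ∀ x, 0 < m x) (x y : V) :
    m x * meanK μ m x y = (m x * transP μ x y + m y * transP μ y x) / 2 := by
  rw [meanK]
  field_simp [(hm x).ne']

lemma mul_meanK_nonneg (hμ : Nonneg μ) (hm : ∀ x, 0 < m x) (x y : V) :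
    0 ≤ m x * meanK μ m x y := by
  rw [mul_meanK hm]
  exact div_nonneg (add_nonneg (mul_nonneg (hm x).le (transP_nonneg hμ x y))
    (mul_nonneg (hm y).le (transP_nonneg hμ y x))) zero_le_two

lemma mul_meanK_comm (hm : ∀ x, 0 < m x) (x y : V) :
    m x * meanK μ m x y = m y * meanK μ m y x := by
  rw [mul_meanK hm, mul_meanK hm, add_comm]

lemma sum_mul_meanK_le (hm : IsPerron μ m) (x : V) : ∑ y, m x * meanK μ m x y ≤ m x := by
  obtain ⟨hpos, -, hstat⟩ := hm
  simp only [mul_meanK hpos, ← sum_div, sum_add_distrib, ← mul_sum, ← hstat x]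
  nlinarith [sum_transP_le_one (μ := μ) x, hpos x]

end MeanKernel

theorem dirichlet_cheeger_general
    {V : Type*} [Fintype V] (μ : V → V → ℝ) (m : V → ℝ)
    (hnn : Nonneg μ) (hm : IsPerron μ m)
    (p : ℝ) (hp : 1 < p)
    (𝒱 : Finset V) :
    (2 ^ (p - 1) / p ^ p) * (isoD (fun x y => m x * meanK μ m x y) m 𝒱) ^ p
      ≤ lamD (fun x y => m x * meanK μ m x y) m p 𝒱 :=
  isoD_rpow_le_lamD (mul_meanK_nonneg hnn hm.1) (mul_meanK_comm hm.1) (sum_mul_meanK_le hm)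
    hm.1 hp

/-- Dirichlet Cheeger inequality for the `p`-Laplacian. -/
theorem dirichlet_cheeger
    {V : Type*} [Fintype V] (μ : V → V → ℝ) (m : V → ℝ)
    (hnn : Nonneg μ) (hconn : StronglyConnectedW μ) (hm : IsPerron μ m)
    (p : ℝ) (hp : 1 < p)
    (𝒱 : Finset V) (h𝒱 : 𝒱.Nonempty) (h𝒱' : 𝒱 ≠ Finset.univ) :
    (2 ^ (p - 1) / p ^ p) * (isoD (fun x y => m x * meanK μ m x y) m 𝒱) ^ p
      ≤ lamD (fun x y => m x * meanK μ m x y) m p 𝒱 :=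
  dirichlet_cheeger_general μ m hnn hm p hp 𝒱
end
end
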